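/- Let R be a complete local Noetherian domain of characteristic p > 0 with \mathfrak{a}, J \subseteq R ideals, \mathfrak{a} \subseteq \sqrt{J}. Then the F-threshold up to Frobenius closure can be computed using integral closures of powers: \tilde{c}^J(\mathfrak{a}) = sup\{ n/p^e : (\overline{\mathfrak{a}^n})^{1/p^e} \not\subseteq J R_{perf} \}. -/

import Mathlib

/-!
Write `ν e` for the largest `m` with `𝔞 ^ m ⊄ (J^[p^e])^F`. Since `J R_perf ∩ R = J^F`, an
element `x` has a `p^e`-th root outside `J R_perf` exactly when `x ∉ (J^[p^e])^F`. As `𝔞 ^ m`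
lies in its integral closure, each `ν e / p^e` belongs to the set (or is `0`), so `L ≤ sup`.
Conversely, if `x` is integral over `𝔞 ^ m` then `x ^ k ∈ 𝔞 ^ (m * (k - n))` for a fixed `n`; if
moreover `x` has a `p^e`-th root outside `J R_perf`, then `x ^ p ^ d` shows
`ν (d + e) ≥ m * (p ^ d - n)`, and dividing by `p ^ (d + e)` and letting `d → ∞` gives
`m / p^e ≤ L`. This elementwise bound replaces the uniform Briançon–Skoda containment.
-/

/-- The Frobenius (bracket) power `I^{[q]}` of an ideal. -/
def frobPow {R : Type} [CommRing R] (I : Ideal R) (q : ℕ) : Ideal R :=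
  Ideal.span ((· ^ q) '' (I : Set R))

/-- The Frobenius closure of an ideal in a ring of characteristic `p`. -/
def frobClosure {R : Type} [CommRing R] (p : ℕ) (I : Ideal R) : Set R :=
  {x | ∃ e : ℕ, x ^ p ^ e ∈ frobPow I (p ^ e)}

/-- The tight closure of an ideal in a domain of characteristic `p`. -/
def tightClosure {R : Type} [CommRing R] (p : ℕ) (I : Ideal R) : Set R :=
  {x | ∃ c : R, c ≠ 0 ∧ ∀ e : ℕ, c * x ^ p ^ e ∈ frobPow I (p ^ e)}

/-- Integral closure of an ideal: elements satisfying an equation of integral dependence. -/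
def idealIntClosure {R : Type} [CommRing R] (I : Ideal R) : Set R :=
  {x | ∃ n : ℕ, 0 < n ∧ ∃ c : ℕ → R, (∀ i, 1 ≤ i → i ≤ n → c i ∈ I ^ i) ∧
    x ^ n + ∑ i ∈ Finset.Icc 1 n, c i * x ^ (n - i) = 0}

open Filter Topology

theorem mem_frobPow_of_mem {R : Type} [CommRing R] {I : Ideal R} {x : R} (hx : x ∈ I) (q : ℕ) :
    x ^ q ∈ frobPow I q :=
  Ideal.subset_span ⟨x, hx, rfl⟩

theorem subset_frobClosure {R : Type} [CommRing R] (p : ℕ) (I : Ideal R) :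
    (I : Set R) ⊆ frobClosure p I :=
  fun x hx => ⟨0, by simpa using mem_frobPow_of_mem hx 1⟩

section Frobenius

variable {R S : Type} [CommRing R] [CommRing S] (p : ℕ) [ExpChar R p] [ExpChar S p]

theorem frobPow_eq_map (I : Ideal R) (e : ℕ) :
    frobPow I (p ^ e) = I.map (iterateFrobenius R p e) :=
  rfl

theorem frobPow_frobPow (I : Ideal R) (q e : ℕ) :
    frobPow (frobPow I q) (p ^ e) = frobPow I (q * p ^ e) := by
  rw [frobPow_eq_map, frobPow, Ideal.map_span, frobPow, Set.image_image]
  simp only [iterateFrobenius_def, ← pow_mul]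

theorem pow_mem_frobPow_mul {I : Ideal R} {x : R} {q : ℕ} (hx : x ∈ frobPow I q) (e : ℕ) :
    x ^ p ^ e ∈ frobPow I (q * p ^ e) :=
  frobPow_frobPow p I q e ▸ mem_frobPow_of_mem hx _

theorem map_frobPow (φ : R →+* S) (I : Ideal R) (e : ℕ) :
    (frobPow I (p ^ e)).map φ = frobPow (I.map φ) (p ^ e) := by
  rw [frobPow_eq_map, frobPow_eq_map, Ideal.map_map, Ideal.map_map,
    RingHom.iterateFrobenius_comm]

theorem pow_mem_frobPow_iff [PerfectRing S p] {K : Ideal S} {z : S} (e : ℕ) :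
    z ^ p ^ e ∈ frobPow K (p ^ e) ↔ z ∈ K :=
  Ideal.apply_mem_of_equiv_iff (f := iterateFrobeniusEquiv S p e)

end Frobenius

section Perfection

variable {R S : Type} [CommRing R] [CommRing S] (p : ℕ) [ExpChar R p] [ExpChar S p]
  {φ : R →+* S}

theorem mem_frobClosure_of_map_mem_map (hφ : Function.Injective φ)
    (hgen : ∀ y : S, ∃ (e : ℕ) (r : R), y ^ p ^ e = φ r) {I : Ideal R} {x : R}
    (hx : φ x ∈ I.map φ) : x ∈ frobClosure p I := by
  suffices h : ∀ y ∈ I.map φ, ∃ e, ∃ r ∈ frobPow I (p ^ e), y ^ p ^ e = φ r by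
    obtain ⟨e, r, hr, hxr⟩ := h _ hx
    exact ⟨e, hφ (map_pow φ x _ ▸ hxr) ▸ hr⟩
  intro y hy
  induction hy using Submodule.span_induction with
  | mem y hy =>
    obtain ⟨a, ha, rfl⟩ := hy
    exact ⟨0, a, by simpa using mem_frobPow_of_mem ha 1, by simp⟩
  | zero => exact ⟨0, 0, zero_mem _, by simp⟩
  | add y₁ y₂ _ _ h₁ h₂ =>
    obtain ⟨e₁, r₁, hr₁, hy₁⟩ := h₁
    obtain ⟨e₂, r₂, hr₂, hy₂⟩ := h₂
    refine ⟨e₁ + e₂, r₁ ^ p ^ e₂ + r₂ ^ p ^ e₁, add_mem ?_ ?_, ?_⟩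
    · simpa [← pow_add] using pow_mem_frobPow_mul p hr₁ e₂
    · simpa [← pow_add, add_comm e₁] using pow_mem_frobPow_mul p hr₂ e₁
    · rw [add_pow_expChar_pow, map_add, map_pow, map_pow, ← hy₁, ← hy₂, ← pow_mul,
        ← pow_mul, ← pow_add, ← pow_add, add_comm e₂]
  | smul c y _ h =>
    obtain ⟨e, r, hr, hy⟩ := h
    obtain ⟨e', s, hc⟩ := hgen c
    refine ⟨e + e', s ^ p ^ e * r ^ p ^ e', ?_, ?_⟩
    · exact Ideal.mul_mem_left _ _ (by simpa [← pow_add] using pow_mem_frobPow_mul p hr e')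
    · rw [smul_eq_mul, mul_pow, map_mul, map_pow, map_pow, ← hc, ← hy, ← pow_mul, ← pow_mul,
        ← pow_add, ← pow_add, add_comm e']

variable [PerfectRing S p]

theorem map_mem_map_iff_mem_frobClosure (hφ : Function.Injective φ)
    (hgen : ∀ y : S, ∃ (e : ℕ) (r : R), y ^ p ^ e = φ r) {I : Ideal R} {x : R} :
    φ x ∈ I.map φ ↔ x ∈ frobClosure p I := by
  refine ⟨mem_frobClosure_of_map_mem_map p hφ hgen, fun ⟨e, he⟩ => ?_⟩
  rw [← pow_mem_frobPow_iff p e, ← map_frobPow, ← map_pow]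
  exact Ideal.mem_map_of_mem φ he

theorem mem_map_iff_mem_frobClosure_frobPow (hφ : Function.Injective φ)
    (hgen : ∀ y : S, ∃ (e : ℕ) (r : R), y ^ p ^ e = φ r) {J : Ideal R} {x : R} {z : S}
    {e : ℕ} (hz : z ^ p ^ e = φ x) :
    z ∈ J.map φ ↔ x ∈ frobClosure p (frobPow J (p ^ e)) := by
  rw [← pow_mem_frobPow_iff p e, ← map_frobPow, hz,
    map_mem_map_iff_mem_frobClosure p hφ hgen]

theorem exists_pow_eq_notMem_map_iff (hφ : Function.Injective φ)
    (hgen : ∀ y : S, ∃ (e : ℕ) (r : R), y ^ p ^ e = φ r) (J : Ideal R) (x : R) (e : ℕ) :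
    (∃ z : S, z ^ p ^ e = φ x ∧ z ∉ J.map φ) ↔ x ∉ frobClosure p (frobPow J (p ^ e)) := by
  refine ⟨fun ⟨z, hz, hzJ⟩ => (mem_map_iff_mem_frobClosure_frobPow p hφ hgen hz).not.1 hzJ,
    fun hx => ?_⟩
  obtain ⟨z, hz⟩ := (bijective_iterateFrobenius S p e).surjective (φ x)
  exact ⟨z, hz, (mem_map_iff_mem_frobClosure_frobPow p hφ hgen hz).not.2 hx⟩

end Perfection

section IntegralClosure

variable {R : Type} [CommRing R]

theorem mem_idealIntClosure_of_mem {I : Ideal R} {x : R} (hx : x ∈ I) :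
    x ∈ idealIntClosure I :=
  ⟨1, one_pos, fun _ => -x, fun i h1 h2 => by simpa [le_antisymm h2 h1] using I.neg_mem hx,
    by simp⟩

theorem exists_pow_mem_pow_sub_of_mem_idealIntClosure {I : Ideal R} {x : R}
    (hx : x ∈ idealIntClosure I) : ∃ n, ∀ k, x ^ k ∈ I ^ (k - n) := by
  obtain ⟨n, -, c, hc, heq⟩ := hx
  refine ⟨n, fun k => Nat.strong_induction_on k fun k ih => ?_⟩
  rcases lt_or_ge k n with hk | hk
  · simp [Nat.sub_eq_zero_of_le hk.le]
  have hxk : x ^ k = -∑ i ∈ Finset.Icc 1 n, c i * x ^ (k - i) := by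
    calc x ^ k = x ^ (k - n) * x ^ n := by rw [← pow_add, Nat.sub_add_cancel hk]
      _ = x ^ (k - n) * -∑ i ∈ Finset.Icc 1 n, c i * x ^ (n - i) := by
        rw [eq_neg_of_add_eq_zero_left heq]
      _ = -∑ i ∈ Finset.Icc 1 n, c i * x ^ (k - i) := by
        rw [mul_neg, Finset.mul_sum]
        refine congrArg _ (Finset.sum_congr rfl fun i hi => ?_)
        have := (Finset.mem_Icc.1 hi).2
        rw [mul_left_comm, ← pow_add, show k - n + (n - i) = k - i by omega]
  rw [hxk]
  refine neg_mem (Ideal.sum_mem _ fun i hi => ?_)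
  obtain ⟨hi1, hin⟩ := Finset.mem_Icc.1 hi
  refine Ideal.pow_le_pow_right (n := i + (k - i - n)) (by omega) ?_
  rw [pow_add]
  exact Ideal.mul_mem_mul (hc i hi1 hin) (ih (k - i) (by omega))

end IntegralClosure

theorem div_pow_le_of_tendsto {p : ℕ} (hp : 1 < p) {ν : ℕ → ℕ} {L : ℝ}
    (hL : Tendsto (fun e => (ν e : ℝ) / (p : ℝ) ^ e) atTop (𝓝 L)) {m e K : ℕ}
    (h : ∀ d, m * p ^ d ≤ ν (d + e) + K) : (m : ℝ) / (p : ℝ) ^ e ≤ L := by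
  have hp0 : (0 : ℝ) < p := by positivity
  have hshift : Tendsto (fun d => (ν (d + e) : ℝ) / (p : ℝ) ^ (d + e)) atTop (𝓝 L) :=
    hL.comp (tendsto_add_atTop_nat e)
  have hlower : Tendsto (fun d => (m : ℝ) / (p : ℝ) ^ e - (K : ℝ) / (p : ℝ) ^ (d + e)) atTop
      (𝓝 ((m : ℝ) / (p : ℝ) ^ e)) := by
    simpa using tendsto_const_nhds.sub (tendsto_const_nhds.div_atTop
      ((tendsto_pow_atTop_atTop_of_one_lt (by exact_mod_cast hp : (1 : ℝ) < p)).comp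
        (tendsto_add_atTop_nat e)))
  refine le_of_tendsto_of_tendsto' hlower hshift fun d => ?_
  have hd : (m : ℝ) * p ^ d ≤ ν (d + e) + K := by exact_mod_cast h d
  rw [sub_le_iff_le_add, ← add_div, div_le_div_iff₀ (by positivity) (by positivity), pow_add]
  nlinarith [pow_pos hp0 e]

theorem bddAbove_setOf_not_pow_le {R : Type} [CommRing R] {I K : Ideal R} (hI : I.FG)
    (h : I ≤ K.radical) : BddAbove {m | ¬I ^ m ≤ K} := by
  obtain ⟨N, hN⟩ := Ideal.exists_pow_le_of_le_radical_of_fg h hI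
  exact ⟨N, fun m hm => le_of_not_gt fun hlt => hm ((Ideal.pow_le_pow_right hlt.le).trans hN)⟩

theorem bddAbove_setOf_notMem_frobClosure_frobPow {R : Type} [CommRing R] [IsNoetherianRing R]
    (p : ℕ) {𝔞 J : Ideal R} (hrad : 𝔞 ≤ J.radical) (q : ℕ) :
    BddAbove {m | ∃ x ∈ 𝔞 ^ m, x ∉ frobClosure p (frobPow J q)} := by
  have hJ : J ≤ (frobPow J q).radical := fun y hy => ⟨q, mem_frobPow_of_mem hy q⟩
  refine (bddAbove_setOf_not_pow_le (IsNoetherian.noetherian 𝔞)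
    (hrad.trans (Ideal.radical_le_radical_iff.2 hJ))).mono ?_
  rintro m ⟨x, hx, hxF⟩ hle
  exact hxF (subset_frobClosure p _ (hle hx))

theorem stmt11_general (p : ℕ) [Fact p.Prime] (R : Type) [CommRing R]
    [IsNoetherianRing R] [CharP R p]
    (𝔞 J : Ideal R) (hrad : 𝔞 ≤ J.radical)
    (Rp : Type) [CommRing Rp] [CharP Rp p] [PerfectRing Rp p]
    (φ : R →+* Rp) (hφ : Function.Injective φ)
    (hgen : ∀ x : Rp, ∃ (e : ℕ) (r : R), x ^ p ^ e = φ r)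
    (L : ℝ)
    (hL : Filter.Tendsto
      (fun e : ℕ =>
        ((sSup {m : ℕ | ∃ x ∈ 𝔞 ^ m, x ∉ frobClosure p (frobPow J (p ^ e))} : ℕ) : ℝ)
          / (p : ℝ) ^ e)
      Filter.atTop (nhds L)) :
    L = sSup {t : ℝ | ∃ m e : ℕ, t = (m : ℝ) / (p : ℝ) ^ e ∧
      ∃ x ∈ idealIntClosure (𝔞 ^ m), ∃ z : Rp, z ^ p ^ e = φ x ∧ z ∉ J.map φ} := by
  set T := {t : ℝ | ∃ m e : ℕ, t = (m : ℝ) / (p : ℝ) ^ e ∧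
    ∃ x ∈ idealIntClosure (𝔞 ^ m), ∃ z : Rp, z ^ p ^ e = φ x ∧ z ∉ J.map φ}
  have hbdd := bddAbove_setOf_notMem_frobClosure_frobPow p hrad
  have hroot := exists_pow_eq_notMem_map_iff p hφ hgen J
  have hub : ∀ t ∈ T, t ≤ L := by
    rintro _ ⟨m, e, rfl, x, hx, z, hzx, hzJ⟩
    obtain ⟨n, hn⟩ := exists_pow_mem_pow_sub_of_mem_idealIntClosure hx
    refine div_pow_le_of_tendsto (Fact.out : p.Prime).one_lt hL (K := m * n) fun d => ?_
    have hroot_d : z ^ p ^ (d + e) = φ (x ^ p ^ d) := by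
      rw [add_comm, pow_add, pow_mul, hzx, map_pow]
    calc m * p ^ d ≤ m * (p ^ d - n) + m * n := by
          rw [← mul_add]; exact Nat.mul_le_mul_left _ le_tsub_add
      _ ≤ _ := Nat.add_le_add_right (le_csSup (hbdd _)
          ⟨x ^ p ^ d, pow_mul 𝔞 m _ ▸ hn _, (hroot _ _).1 ⟨z, hroot_d, hzJ⟩⟩) _
  have hL0 : 0 ≤ L := ge_of_tendsto' hL fun e => by positivity
  refine le_antisymm (le_of_tendsto' hL fun e => ?_) (Real.sSup_le hub hL0)
  rcases Set.eq_empty_or_nonempty {m | ∃ x ∈ 𝔞 ^ m, x ∉ frobClosure p (frobPow J (p ^ e))}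
    with hempty | hne
  · rw [hempty, csSup_empty, bot_eq_zero, Nat.cast_zero, zero_div]
    exact Real.sSup_nonneg fun t ⟨m, e, ht, _⟩ => ht ▸ by positivity
  · obtain ⟨x, hx, hxF⟩ := Nat.sSup_mem hne (hbdd _)
    exact le_csSup ⟨L, hub⟩ ⟨_, e, rfl, x, mem_idealIntClosure_of_mem hx, (hroot x e).2 hxF⟩

/-- For a complete local Noetherian domain of characteristic `p`, the F-threshold up to
Frobenius closure can be computed using integral closures of powers:
`tilde c^J(𝔞) = sup { n/p^e : (closure of 𝔞^n)^{1/p^e} ⊄ J R_perf }`. -/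
theorem stmt11 (p : ℕ) [Fact p.Prime] (R : Type) [CommRing R] [IsDomain R]
    [IsNoetherianRing R] [IsLocalRing R] [CharP R p]
    [IsAdicComplete (IsLocalRing.maximalIdeal R) R]
    (𝔞 J : Ideal R) (hrad : 𝔞 ≤ J.radical)
    (Rp : Type) [CommRing Rp] [IsDomain Rp] [CharP Rp p] [PerfectRing Rp p]
    (φ : R →+* Rp) (hφ : Function.Injective φ)
    (hgen : ∀ x : Rp, ∃ (e : ℕ) (r : R), x ^ p ^ e = φ r)
    (L : ℝ)
    (hL : Filter.Tendsto
      (fun e : ℕ =>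
        ((sSup {m : ℕ | ∃ x ∈ 𝔞 ^ m, x ∉ frobClosure p (frobPow J (p ^ e))} : ℕ) : ℝ)
          / (p : ℝ) ^ e)
      Filter.atTop (nhds L)) :
    L = sSup {t : ℝ | ∃ m e : ℕ, t = (m : ℝ) / (p : ℝ) ^ e ∧
      ∃ x ∈ idealIntClosure (𝔞 ^ m), ∃ z : Rp, z ^ p ^ e = φ x ∧ z ∉ J.map φ} :=
  stmt11_general p R 𝔞 J hrad Rp φ hφ hgen L hL
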